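/- There exist constants c > 0, C > 0 and N ∈ ℕ such that for all integers n ≥ N and all integers m with m | n, 1 ≤ m, and 2m ≤ n, one has c/√(m·n) ≤ Cov(n, m) ≤ C/√(m·n). Equivalently, writing k := n/m for the number of folds, Cov(n, m) = Θ(√k / n) uniformly over admissible fold sizes. -/
import Mathlib

set_option maxHeartbeats 1600000

open Real

/-- Binomial coefficient with an integer lower index, with the convention that it
vanishes for negative lower index (and, via `Nat.choose`, above the upper index). -/
def ibinom (a : ℕ) (b : ℤ) : ℕ := if 0 ≤ b then a.choose b.toNat else 0

/-- The fold covariance of k-fold cross-validation of the Majority algorithm on `n`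
i.i.d. uniformly random binary labels with fold size `m = n/k`:
`Cov(n, m) = 2^{-n} · Σ_{j=0}^{m-1} binom(m-1, j)² · binom(n-2m, ⌊(n-m)/2⌋ - j)`. -/
noncomputable def Cov (n m : ℕ) : ℝ :=
  (2 : ℝ)⁻¹ ^ n * ∑ j ∈ Finset.range m,
    ((m - 1).choose j : ℝ) ^ 2 * (ibinom (n - 2 * m) (((n : ℤ) - m) / 2 - j) : ℝ)


lemma mul_sqrt_le_mul_sqrt {A B x y : ℝ} (hA : 0 ≤ A) (hx : 0 ≤ x) (hy : 0 ≤ y)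
    (h : A^2 * x ≤ B^2 * y) (hB : 0 ≤ B) : A * Real.sqrt x ≤ B * Real.sqrt y := by
  have h1 : A * Real.sqrt x = Real.sqrt (A^2*x) := by
    rw [Real.sqrt_mul (by positivity), Real.sqrt_sq hA]
  have h2 : B * Real.sqrt y = Real.sqrt (B^2*y) := by
    rw [Real.sqrt_mul (by positivity), Real.sqrt_sq hB]
  rw [h1, h2]; exact Real.sqrt_le_sqrt h

lemma cb_upper (t : ℕ) : (Nat.centralBinom t : ℝ) * Real.sqrt ((t:ℝ)+1) ≤ 4 ^ t := by
  induction t with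
  | zero => simp [Nat.centralBinom]
  | succ t ih =>
    have hx0 : (0:ℝ) ≤ Real.sqrt ((t:ℝ)+1) := Real.sqrt_nonneg _
    have hy0 : (0:ℝ) ≤ Real.sqrt ((t:ℝ)+2) := Real.sqrt_nonneg _
    have hx : Real.sqrt ((t:ℝ)+1) ^ 2 = (t:ℝ)+1 := Real.sq_sqrt (by positivity)
    have hy : Real.sqrt ((t:ℝ)+2) ^ 2 = (t:ℝ)+2 := Real.sq_sqrt (by positivity)
    have hrec : ((t:ℝ) + 1) * (Nat.centralBinom (t+1) : ℝ) = 2 * (2*(t:ℝ)+1) * (Nat.centralBinom t : ℝ) := by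
      exact_mod_cast congrArg (fun x : ℕ => (x:ℝ)) (Nat.succ_mul_centralBinom_succ t)
    have hkey : (2*(t:ℝ)+1) * Real.sqrt ((t:ℝ)+2) ≤ 2*((t:ℝ)+1) * Real.sqrt ((t:ℝ)+1) := by
      apply mul_sqrt_le_mul_sqrt (by positivity) (by positivity) (by positivity) (by nlinarith [sq_nonneg ((t:ℝ))]) (by positivity)
    have hcb0 : (0:ℝ) ≤ (Nat.centralBinom t : ℝ) := Nat.cast_nonneg _
    have harg : ((t+1:ℕ):ℝ) + 1 = (t:ℝ) + 2 := by push_cast; ring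
    rw [harg]
    have h1 : ((t:ℝ)+1) * ((Nat.centralBinom (t+1) : ℝ) * Real.sqrt ((t:ℝ)+2)) ≤ ((t:ℝ)+1) * 4^(t+1) := by
      calc ((t:ℝ)+1) * ((Nat.centralBinom (t+1):ℝ) * Real.sqrt ((t:ℝ)+2))
          = (2 * (Nat.centralBinom t:ℝ)) * ((2*(t:ℝ)+1) * Real.sqrt ((t:ℝ)+2)) := by
            rw [← mul_assoc, hrec]; ring
        _ ≤ (2 * (Nat.centralBinom t:ℝ)) * (2*((t:ℝ)+1) * Real.sqrt ((t:ℝ)+1)) := by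
            apply mul_le_mul_of_nonneg_left hkey (by positivity)
        _ = 4*((t:ℝ)+1) * ((Nat.centralBinom t : ℝ) * Real.sqrt ((t:ℝ)+1)) := by ring
        _ ≤ 4*((t:ℝ)+1) * 4^t := by
            apply mul_le_mul_of_nonneg_left ih (by positivity)
        _ = ((t:ℝ)+1) * 4^(t+1) := by ring
    exact le_of_mul_le_mul_left h1 (by positivity)

lemma cb_lower (t : ℕ) (ht : 1 ≤ t) : (4:ℝ)^t ≤ 2 * Real.sqrt (t:ℝ) * (Nat.centralBinom t : ℝ) := by
  induction t with
  | zero => omega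
  | succ t ih =>
    rcases Nat.eq_or_lt_of_le ht with h1 | h1
    · simp [← h1, Nat.centralBinom]
      norm_num [Nat.choose]
    · have ht' : 1 ≤ t := by omega
      have IH := ih ht'
      have hx0 : (0:ℝ) ≤ Real.sqrt (t:ℝ) := Real.sqrt_nonneg _
      have hy0 : (0:ℝ) ≤ Real.sqrt ((t:ℝ)+1) := Real.sqrt_nonneg _
      have hx : Real.sqrt ((t:ℝ)) ^ 2 = (t:ℝ) := Real.sq_sqrt (by positivity)
      have hy : Real.sqrt ((t:ℝ)+1) ^ 2 = (t:ℝ)+1 := Real.sq_sqrt (by positivity)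
      have hrec : ((t:ℝ) + 1) * (Nat.centralBinom (t+1) : ℝ) = 2 * (2*(t:ℝ)+1) * (Nat.centralBinom t : ℝ) := by
        exact_mod_cast congrArg (fun x : ℕ => (x:ℝ)) (Nat.succ_mul_centralBinom_succ t)
      have hkey : 2*((t:ℝ)+1) * Real.sqrt ((t:ℝ)) ≤ (2*(t:ℝ)+1) * Real.sqrt ((t:ℝ)+1) := by
        apply mul_sqrt_le_mul_sqrt (by positivity) (by positivity) (by positivity) (by nlinarith [sq_nonneg ((t:ℝ))]) (by positivity)
      have hcb0 : (0:ℝ) ≤ (Nat.centralBinom t : ℝ) := Nat.cast_nonneg _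
      have harg : ((t+1:ℕ):ℝ) = (t:ℝ) + 1 := by push_cast; ring
      rw [harg]
      have h1 : ((t:ℝ)+1) * (4:ℝ)^(t+1) ≤ ((t:ℝ)+1) * (2 * Real.sqrt ((t:ℝ)+1) * (Nat.centralBinom (t+1) : ℝ)) := by
        calc ((t:ℝ)+1) * (4:ℝ)^(t+1)
            = 4*((t:ℝ)+1) * 4^t := by ring
          _ ≤ 4*((t:ℝ)+1) * (2 * Real.sqrt (t:ℝ) * (Nat.centralBinom t : ℝ)) := by
              apply mul_le_mul_of_nonneg_left IH (by positivity)
          _ = (2 * (Nat.centralBinom t:ℝ)) * (2*((t:ℝ)+1) * Real.sqrt (t:ℝ)) * 2 := by ring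
          _ ≤ (2 * (Nat.centralBinom t:ℝ)) * ((2*(t:ℝ)+1) * Real.sqrt ((t:ℝ)+1)) * 2 := by
              apply mul_le_mul_of_nonneg_right (mul_le_mul_of_nonneg_left hkey (by positivity)) (by norm_num)
          _ = 2 * Real.sqrt ((t:ℝ)+1) * (2 * (2*(t:ℝ)+1) * (Nat.centralBinom t:ℝ)) := by ring
          _ = ((t:ℝ)+1) * (2 * Real.sqrt ((t:ℝ)+1) * (Nat.centralBinom (t+1) : ℝ)) := by
              rw [← hrec]; ring
      exact le_of_mul_le_mul_left h1 (by positivity)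

lemma choose_succ_half (t : ℕ) : Nat.centralBinom (t+1) = 2 * (2*t+1).choose t := by
  rw [Nat.centralBinom, show 2*(t+1) = (2*t+1)+1 by ring, Nat.choose_succ_succ, Nat.choose_symm_half]
  ring

lemma central_lower (N : ℕ) : (2:ℝ)^N ≤ 2 * Real.sqrt ((N:ℝ)+1) * (N.choose (N/2) : ℝ) := by
  rcases Nat.even_or_odd N with ⟨t, ht⟩ | ⟨t, ht⟩
  · subst ht
    rcases Nat.eq_zero_or_pos t with rfl | htpos
    · norm_num
    · have h2 : (t + t)/2 = t := by omega
      rw [h2]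
      have hcb : (t+t).choose t = Nat.centralBinom t := by rw [Nat.centralBinom]; congr 1; omega
      rw [hcb]
      have hlow := cb_lower t htpos
      have h4 : (4:ℝ)^t = 2^(t+t) := by rw [show (4:ℝ) = 2^2 by norm_num, ← pow_mul]; congr 1; omega
      have hsq : Real.sqrt (t:ℝ) ≤ Real.sqrt (((t+t:ℕ):ℝ)+1) := by
        apply Real.sqrt_le_sqrt; push_cast; linarith
      nlinarith [(by positivity : (0:ℝ) ≤ (Nat.centralBinom t : ℝ)), Real.sqrt_nonneg ((t:ℝ)),
        mul_le_mul_of_nonneg_left hsq (by positivity : (0:ℝ) ≤ 2 * (Nat.centralBinom t : ℝ))]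
  · subst ht
    have h2 : (2*t+1)/2 = t := by omega
    rw [h2]
    have hcb : (Nat.centralBinom (t+1) : ℝ) = 2 * ((2*t+1).choose t : ℝ) := by
      exact_mod_cast congrArg (fun x : ℕ => (x:ℝ)) (choose_succ_half t)
    have hlow := cb_lower (t+1) (by omega)
    rw [hcb] at hlow
    push_cast at hlow
    have h4 : (4:ℝ)^(t+1) = 2 * 2^(2*t+1) := by
      rw [show (4:ℝ) = 2^2 by norm_num, ← pow_mul]
      rw [show 2*(t+1) = (2*t+1)+1 by ring, pow_succ]; ring
    rw [h4] at hlow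
    have hsq : Real.sqrt ((t:ℝ)+1) ≤ Real.sqrt (((2*t+1:ℕ):ℝ)+1) := by
      apply Real.sqrt_le_sqrt; push_cast; linarith
    nlinarith [(by positivity : (0:ℝ) ≤ ((2*t+1).choose t : ℝ)), Real.sqrt_nonneg ((t:ℝ)+1),
      mul_le_mul_of_nonneg_left hsq (by positivity : (0:ℝ) ≤ 4 * ((2*t+1).choose t : ℝ))]

lemma central_upper (N : ℕ) : (N.choose (N/2) : ℝ) * Real.sqrt ((N:ℝ)+1) ≤ 2 * 2^N := by
  rcases Nat.even_or_odd N with ⟨t, ht⟩ | ⟨t, ht⟩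
  · subst ht
    have h2 : (t + t)/2 = t := by omega
    rw [h2]
    have hcb : (t+t).choose t = Nat.centralBinom t := by rw [Nat.centralBinom]; congr 1; omega
    rw [hcb]
    have hup := cb_upper t
    have h4 : (4:ℝ)^t = 2^(t+t) := by rw [show (4:ℝ) = 2^2 by norm_num, ← pow_mul]; congr 1; omega
    -- sqrt(2t+1) ≤ sqrt 2 * sqrt(t+1) ≤ 2 sqrt(t+1)... use sqrt((t+t)+1) ≤ 2 sqrt(t+1)
    have hsq : Real.sqrt (((t+t:ℕ):ℝ)+1) ≤ 2 * Real.sqrt ((t:ℝ)+1) := by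
      rw [show (2:ℝ) * Real.sqrt ((t:ℝ)+1) = Real.sqrt (4*((t:ℝ)+1)) by
        rw [show (4:ℝ) = 2^2 by norm_num, Real.sqrt_mul (by positivity), Real.sqrt_sq (by norm_num)]]
      apply Real.sqrt_le_sqrt; push_cast; linarith
    calc (Nat.centralBinom t : ℝ) * Real.sqrt (((t+t:ℕ):ℝ)+1)
        ≤ (Nat.centralBinom t : ℝ) * (2 * Real.sqrt ((t:ℝ)+1)) :=
          mul_le_mul_of_nonneg_left hsq (by positivity)
      _ = 2 * ((Nat.centralBinom t : ℝ) * Real.sqrt ((t:ℝ)+1)) := by ring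
      _ ≤ 2 * 4^t := by linarith [cb_upper t]
      _ = 2 * 2^(t+t) := by rw [h4]
  · subst ht
    have h2 : (2*t+1)/2 = t := by omega
    rw [h2]
    have hcb : ((2*t+1).choose t : ℝ) = (Nat.centralBinom (t+1) : ℝ) / 2 := by
      have : (Nat.centralBinom (t+1) : ℝ) = 2 * ((2*t+1).choose t : ℝ) := by
        exact_mod_cast congrArg (fun x : ℕ => (x:ℝ)) (choose_succ_half t)
      linarith
    rw [hcb]
    have hsq : Real.sqrt (((2*t+1:ℕ):ℝ)+1) ≤ 2 * Real.sqrt ((t:ℝ)+2) := by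
      rw [show (2:ℝ) * Real.sqrt ((t:ℝ)+2) = Real.sqrt (4*((t:ℝ)+2)) by
        rw [show (4:ℝ) = 2^2 by norm_num, Real.sqrt_mul (by positivity), Real.sqrt_sq (by norm_num)]]
      apply Real.sqrt_le_sqrt; push_cast; linarith
    have hup := cb_upper (t+1)
    have harg : ((t+1:ℕ):ℝ) + 1 = (t:ℝ) + 2 := by push_cast; ring
    rw [harg] at hup
    have h4 : (4:ℝ)^(t+1) = 2 * 2^(2*t+1) := by
      rw [show (4:ℝ) = 2^2 by norm_num, ← pow_mul]
      rw [show 2*(t+1) = (2*t+1)+1 by ring, pow_succ]; ring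
    calc (Nat.centralBinom (t+1) : ℝ) / 2 * Real.sqrt (((2*t+1:ℕ):ℝ)+1)
        ≤ (Nat.centralBinom (t+1) : ℝ) / 2 * (2 * Real.sqrt ((t:ℝ)+2)) :=
          mul_le_mul_of_nonneg_left hsq (by positivity)
      _ = (Nat.centralBinom (t+1) : ℝ) * Real.sqrt ((t:ℝ)+2) := by ring
      _ ≤ 4^(t+1) := hup
      _ = 2 * 2^(2*t+1) := h4

lemma choose_upper (N k : ℕ) : (N.choose k : ℝ) * Real.sqrt ((N:ℝ)+1) ≤ 2 * 2^N := by
  have h := Nat.choose_le_middle k N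
  calc (N.choose k : ℝ) * Real.sqrt ((N:ℝ)+1)
      ≤ (N.choose (N/2) : ℝ) * Real.sqrt ((N:ℝ)+1) := by
        apply mul_le_mul_of_nonneg_right (by exact_mod_cast h) (Real.sqrt_nonneg _)
    _ ≤ 2 * 2^N := central_upper N

lemma middle_ratio (N : ℕ) : ∀ d : ℕ, d ≤ N/2 →
    ((N:ℝ) - 2*d*(d+1)) * (N.choose (N/2) : ℝ) ≤ (N:ℝ) * (N.choose (N/2 - d) : ℝ) := by
  intro d
  induction d with
  | zero => intro _; simp
  | succ d ih =>
    intro hd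
    have hd' : d ≤ N/2 := by omega
    have IH := ih hd'
    set c := N / 2 with hc
    have hc1 : 2*(c:ℝ) ≤ (N:ℝ) := by exact_mod_cast Nat.cast_le.mpr (by omega : 2*c ≤ N)
    have hc2 : (N:ℝ) ≤ 2*(c:ℝ) + 1 := by
      have : N ≤ 2*c+1 := by omega
      exact_mod_cast Nat.cast_le.mpr this
    by_cases hneg : (N:ℝ) - 2*(d+1:ℕ)*((d+1:ℕ)+1) ≤ 0
    · refine le_trans (mul_nonpos_of_nonpos_of_nonneg hneg (by positivity)) (by positivity)
    · push_neg at hneg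
      push_cast at hneg
      set k := c - (d+1) with hk
      have hck : c - d = k + 1 := by omega
      have hrecN := Nat.choose_succ_right_eq N k
      rw [← hck] at hrecN
      have hkc : (k:ℝ) = (c:ℝ) - (d:ℝ) - 1 := by
        have h1 : k + (d+1) = c := by omega
        have := congrArg (fun x : ℕ => (x:ℝ)) h1
        push_cast at this; linarith
      have hcd : ((c - d : ℕ):ℝ) = (c:ℝ) - (d:ℝ) := by
        push_cast [Nat.cast_sub hd']; ring
      have hNk : ((N - k : ℕ):ℝ) = (N:ℝ) - (k:ℝ) := by
        push_cast [Nat.cast_sub (show k ≤ N by omega)]; ring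
      have hrecR : (N.choose (c-d) : ℝ) * ((c:ℝ) - (d:ℝ)) = (N.choose k : ℝ) * ((N:ℝ) - (k:ℝ)) := by
        have h := congrArg (fun x : ℕ => (x:ℝ)) hrecN
        push_cast at h
        rw [← hcd, ← hNk]; push_cast; linarith
      have hPk : (0:ℝ) < (N:ℝ) - (k:ℝ) := by
        rw [hkc]; linarith
      have hE : ((N:ℝ) - 2*((d:ℝ)+1)*((d:ℝ)+2)) * ((N:ℝ) - (k:ℝ)) ≤ ((N:ℝ) - 2*(d:ℝ)*((d:ℝ)+1)) * ((c:ℝ) - (d:ℝ)) := by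
        rw [hkc]
        have h1 : (0:ℝ) ≤ 2*(c:ℝ)+1 - N := by linarith
        have hd0 : (0:ℝ) ≤ (d:ℝ) := by positivity
        nlinarith [mul_nonneg hneg.le h1, mul_nonneg (by positivity : (0:ℝ) ≤ (d:ℝ)+1) h1,
          sq_nonneg (d:ℝ), mul_nonneg (mul_nonneg hd0 hd0) hd0]
      have hx0 : (0:ℝ) ≤ (N.choose c : ℝ) := by positivity
      have hcd0 : (0:ℝ) ≤ (c:ℝ) - (d:ℝ) := by
        have : (d:ℝ) ≤ (c:ℝ) := by exact_mod_cast Nat.cast_le.mpr hd'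
        linarith
      have step : ((N:ℝ) - 2*((d:ℝ)+1)*((d:ℝ)+2)) * (N.choose c : ℝ) * ((N:ℝ)-(k:ℝ))
          ≤ (N:ℝ) * (N.choose k:ℝ) * ((N:ℝ)-(k:ℝ)) := by
        calc ((N:ℝ) - 2*((d:ℝ)+1)*((d:ℝ)+2)) * (N.choose c : ℝ) * ((N:ℝ)-(k:ℝ))
            ≤ ((N:ℝ) - 2*(d:ℝ)*((d:ℝ)+1)) * (N.choose c : ℝ) * ((c:ℝ)-(d:ℝ)) := by
              nlinarith [mul_le_mul_of_nonneg_left hE hx0]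
          _ ≤ (N:ℝ) * (N.choose (c-d):ℝ) * ((c:ℝ)-(d:ℝ)) := mul_le_mul_of_nonneg_right IH hcd0
          _ = (N:ℝ) * ((N.choose (c-d):ℝ) * ((c:ℝ)-(d:ℝ))) := by ring
          _ = (N:ℝ) * ((N.choose k:ℝ) * ((N:ℝ)-(k:ℝ))) := by rw [hrecR]
          _ = (N:ℝ) * (N.choose k:ℝ) * ((N:ℝ)-(k:ℝ)) := by ring
      have final := le_of_mul_le_mul_right step hPk
      push_cast
      linarith

lemma near_central_aux (N k : ℕ) (hk2 : k ≤ N/2)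
    (h : 4*((2*(k:ℤ)) - N)^2 ≤ (N:ℤ) ∨ ((2*(k:ℤ)) - N)^2 ≤ 1) :
    (2:ℝ)^N ≤ 8 * Real.sqrt ((N:ℝ)+1) * (N.choose k : ℝ) := by
  rcases Nat.eq_zero_or_pos N with rfl | hN
  · have hk0 : k = 0 := by omega
    subst hk0
    simp only [Nat.cast_zero, zero_add, Real.sqrt_one, Nat.choose_self, Nat.cast_one, pow_zero]
    norm_num
  set d := N/2 - k with hdd
  have hkd : N/2 - d = k := by omega
  have hdev : 2*(d:ℤ) ≤ (N:ℤ) - 2*k := by omega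
  have hd4 : 4*d*(d+1) ≤ N := by
    rcases Nat.eq_zero_or_pos d with hd0 | hdpos
    · rw [hd0]; simp
    · rcases h with h | h
      · have h16 : (16:ℤ)*(d:ℤ)^2 ≤ (N:ℤ) := by nlinarith [hdev, (by positivity : (0:ℤ) ≤ (d:ℤ))]
        have h16' : 16*d^2 ≤ N := by exact_mod_cast h16
        nlinarith [hdpos]
      · exfalso
        have : (2:ℤ)*(d:ℤ) ≤ 1 := by nlinarith [hdev, (by positivity : (0:ℤ) ≤ (d:ℤ))]
        omega
  have hmr := middle_ratio N d (by omega)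
  rw [hkd] at hmr
  have hhalf : ((N:ℝ)/2) * (N.choose (N/2) : ℝ) ≤ (N:ℝ) * (N.choose k : ℝ) := by
    have hcast : 2*((d:ℝ)*((d:ℝ)+1)) * 2 ≤ (N:ℝ) := by
      have : ((4*d*(d+1) : ℕ) : ℝ) ≤ (N:ℝ) := Nat.cast_le.mpr hd4
      push_cast at this; linarith
    have hx0 : (0:ℝ) ≤ (N.choose (N/2) : ℝ) := by positivity
    nlinarith [hmr]
  have hchk : (N.choose (N/2) : ℝ) ≤ 2 * (N.choose k : ℝ) := by
    have hN' : (0:ℝ) < (N:ℝ) := by exact_mod_cast hN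
    have hhalf' : (N:ℝ) * (N.choose (N/2) : ℝ) ≤ (N:ℝ) * (2 * (N.choose k : ℝ)) := by linarith
    exact le_of_mul_le_mul_left hhalf' hN'
  calc (2:ℝ)^N ≤ 2 * Real.sqrt ((N:ℝ)+1) * (N.choose (N/2) : ℝ) := central_lower N
    _ ≤ 2 * Real.sqrt ((N:ℝ)+1) * (2 * (N.choose k : ℝ)) := by
        apply mul_le_mul_of_nonneg_left hchk (by positivity)
    _ ≤ 8 * Real.sqrt ((N:ℝ)+1) * (N.choose k : ℝ) := by nlinarith [Real.sqrt_nonneg ((N:ℝ)+1), (by positivity : (0:ℝ) ≤ (N.choose k:ℝ))]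

lemma near_central (N k : ℕ) (hk : k ≤ N)
    (h : 4*((2*(k:ℤ)) - N)^2 ≤ (N:ℤ) ∨ ((2*(k:ℤ)) - N)^2 ≤ 1) :
    (2:ℝ)^N ≤ 8 * Real.sqrt ((N:ℝ)+1) * (N.choose k : ℝ) := by
  rcases le_or_gt k (N/2) with hk2 | hk2
  · exact near_central_aux N k hk2 h
  · have hsym : N.choose k = N.choose (N - k) := by
      rw [Nat.choose_symm hk]
    rw [hsym]
    apply near_central_aux N (N-k) (by omega)
    have hcast : ((N - k : ℕ):ℤ) = (N:ℤ) - (k:ℤ) := by omega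
    rcases h with h | h
    · left; rw [hcast]; nlinarith [h]
    · right; rw [hcast]; nlinarith [h]

lemma ibinom_eq (b s j : ℕ) : ibinom b ((s:ℤ) - j) = if j ≤ s then b.choose (s - j) else 0 := by
  unfold ibinom
  rcases le_or_gt j s with h | h
  · rw [if_pos (by omega), if_pos h]
    congr 1
    omega
  · rw [if_neg (by omega), if_neg (by omega)]

lemma cov_eq (n m : ℕ) (h1 : 1 ≤ m) (h2 : 2*m ≤ n) :
    Cov n m = (2:ℝ)⁻¹^n * ∑ j ∈ Finset.range m,
      ((m-1).choose j : ℝ)^2 *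
        (if j ≤ (n-m)/2 then (((n-2*m).choose ((n-m)/2 - j)) : ℝ) else 0) := by
  unfold Cov
  congr 1
  apply Finset.sum_congr rfl
  intro j hj
  congr 1
  have harg : ((n:ℤ) - m)/2 - j = (((n-m)/2 : ℕ) : ℤ) - j := by omega
  rw [harg, ibinom_eq]
  simp [apply_ite (fun x : ℕ => (x:ℝ))]

lemma vandermonde_le (a b s m : ℕ) :
    ∑ j ∈ Finset.range m, (a.choose j : ℝ) * (if j ≤ s then ((b.choose (s - j)) : ℝ) else 0)
      ≤ ((a+b).choose s : ℝ) := by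
  have key : ∑ j ∈ Finset.range m, a.choose j * (if j ≤ s then b.choose (s - j) else 0)
      ≤ (a+b).choose s := by
    set g : ℕ → ℕ := fun j => if j ≤ s then a.choose j * b.choose (s-j) else 0 with hg
    have h1 : ∑ j ∈ Finset.range m, a.choose j * (if j ≤ s then b.choose (s - j) else 0)
        = ∑ j ∈ Finset.range m, g j := by
      apply Finset.sum_congr rfl
      intro j _
      by_cases h : j ≤ s <;> simp [hg, h]
    rw [h1]
    have h2 : ∑ j ∈ Finset.range m, g j ≤ ∑ j ∈ Finset.range (max m (s+1)), g j :=
      Finset.sum_le_sum_of_subset (by apply Finset.range_subset_range.mpr; omega)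
    have h3 : ∑ j ∈ Finset.range (max m (s+1)), g j = ∑ j ∈ Finset.range (s+1), g j := by
      symm
      apply Finset.sum_subset (by apply Finset.range_subset_range.mpr; omega)
      intro x _ hx
      simp only [Finset.mem_range] at hx
      have hxs : ¬ x ≤ s := by omega
      simp [hg, hxs]
    have h4 : ∑ j ∈ Finset.range (s+1), g j = (a+b).choose s := by
      rw [Nat.add_choose_eq, Finset.Nat.sum_antidiagonal_eq_sum_range_succ_mk]
      apply Finset.sum_congr rfl
      intro j hj
      simp only [Finset.mem_range] at hj
      have hjs : j ≤ s := by omega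
      simp [hg, hjs]
    omega
  calc ∑ j ∈ Finset.range m, (a.choose j : ℝ) * (if j ≤ s then ((b.choose (s - j)) : ℝ) else 0)
      = ((∑ j ∈ Finset.range m, a.choose j * (if j ≤ s then b.choose (s - j) else 0) : ℕ) : ℝ) := by
        push_cast [apply_ite (fun x : ℕ => (x:ℝ))]
        rfl
    _ ≤ ((a+b).choose s : ℝ) := by exact_mod_cast key

lemma cov_nonneg (n m : ℕ) : 0 ≤ Cov n m := by
  unfold Cov
  positivity

lemma cov_upper (n m : ℕ) (h1 : 1 ≤ m) (h2 : 2*m ≤ n) :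
    Cov n m ≤ 2 / Real.sqrt ((m:ℝ) * n) := by
  have hn1 : 1 ≤ n := by omega
  set a := m - 1 with haa
  set b := n - 2*m with hbb
  set s := (n-m)/2 with hss
  have haR : ((a:ℝ)) + 1 = (m:ℝ) := by
    have : a + 1 = m := by omega
    exact_mod_cast congrArg (fun x : ℕ => (x:ℝ)) this
  have habR : ((a+b:ℕ):ℝ) + 1 = (n:ℝ) - (m:ℝ) := by
    have h5 : (a+b) + 1 + m = n := by omega
    have := congrArg (fun x : ℕ => (x:ℝ)) h5
    push_cast at this ⊢
    linarith
  -- the sum bound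
  have hbound : Cov n m ≤ (2:ℝ)⁻¹^n * ((a.choose (a/2) : ℝ) * ((a+b).choose s : ℝ)) := by
    rw [cov_eq n m h1 h2]
    simp only [← haa, ← hbb, ← hss]
    apply mul_le_mul_of_nonneg_left _ (by positivity)
    calc ∑ j ∈ Finset.range m, ((a).choose j : ℝ)^2 *
          (if j ≤ s then (((b).choose (s - j)) : ℝ) else 0)
        ≤ ∑ j ∈ Finset.range m, (a.choose (a/2) : ℝ) * ((a.choose j : ℝ) *
          (if j ≤ s then ((b.choose (s - j)) : ℝ) else 0)) := by
          apply Finset.sum_le_sum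
          intro j _
          have hite : (0:ℝ) ≤ (if j ≤ s then ((b.choose (s - j)) : ℝ) else 0) := by
            split <;> positivity
          have hch : ((a).choose j : ℝ) ≤ (a.choose (a/2) : ℝ) := by
            exact_mod_cast Nat.choose_le_middle j a
          have h0 : (0:ℝ) ≤ ((a).choose j : ℝ) := by positivity
          calc ((a).choose j : ℝ)^2 * (if j ≤ s then (((b).choose (s - j)) : ℝ) else 0)
            = (((a).choose j : ℝ) * ((a.choose j : ℝ) *
              (if j ≤ s then ((b.choose (s - j)) : ℝ) else 0))) := by rw [pow_two]; ring
            _ ≤ (a.choose (a/2) : ℝ) * ((a.choose j : ℝ) *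
              (if j ≤ s then ((b.choose (s - j)) : ℝ) else 0)) := by
                apply mul_le_mul_of_nonneg_right hch (by positivity)
      _ = (a.choose (a/2) : ℝ) * ∑ j ∈ Finset.range m, ((a.choose j : ℝ) *
          (if j ≤ s then ((b.choose (s - j)) : ℝ) else 0)) := by rw [Finset.mul_sum]
      _ ≤ (a.choose (a/2) : ℝ) * ((a+b).choose s : ℝ) := by
          apply mul_le_mul_of_nonneg_left (vandermonde_le a b s m) (by positivity)
  -- square root comparisons
  have hmn0 : (0:ℝ) < Real.sqrt ((m:ℝ) * n) := by
    apply Real.sqrt_pos.mpr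
    have : (0:ℝ) < (m:ℝ) := by exact_mod_cast h1
    have : (0:ℝ) < (n:ℝ) := by exact_mod_cast hn1
    positivity
  rw [le_div_iff₀ hmn0]
  have hA : Real.sqrt ((m:ℝ) * n) ≤ 2 * (Real.sqrt ((m:ℝ)) * Real.sqrt ((n:ℝ) - m)) := by
    rw [show (2:ℝ) * (Real.sqrt ((m:ℝ)) * Real.sqrt ((n:ℝ) - m)) = Real.sqrt (4 * ((m:ℝ) * ((n:ℝ)-m))) by
      rw [show (4:ℝ) = 2^2 by norm_num, Real.sqrt_mul (by positivity), Real.sqrt_sq (by norm_num),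
        Real.sqrt_mul (by positivity)]]
    apply Real.sqrt_le_sqrt
    have hmR : (0:ℝ) ≤ (m:ℝ) := by positivity
    have h4 : (n:ℝ) ≤ 4*((n:ℝ) - m) := by
      have : 2*(m:ℝ) ≤ (n:ℝ) := by exact_mod_cast h2
      linarith
    nlinarith
  have hCov0 := cov_nonneg n m
  calc Cov n m * Real.sqrt ((m:ℝ)*n)
      ≤ Cov n m * (2 * (Real.sqrt ((m:ℝ)) * Real.sqrt ((n:ℝ) - m))) :=
        mul_le_mul_of_nonneg_left hA hCov0
    _ ≤ ((2:ℝ)⁻¹^n * ((a.choose (a/2) : ℝ) * ((a+b).choose s : ℝ))) *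
        (2 * (Real.sqrt ((m:ℝ)) * Real.sqrt ((n:ℝ) - m))) := by
        apply mul_le_mul_of_nonneg_right hbound (by positivity)
    _ = 2 * (2:ℝ)⁻¹^n * (((a.choose (a/2) : ℝ) * Real.sqrt ((m:ℝ))) *
        (((a+b).choose s : ℝ) * Real.sqrt ((n:ℝ) - m))) := by ring
    _ ≤ 2 * (2:ℝ)⁻¹^n * ((2 * 2^a) * (2 * 2^(a+b))) := by
        apply mul_le_mul_of_nonneg_left _ (by positivity)
        have u1 := choose_upper a (a/2)
        have u2 := choose_upper (a+b) s
        rw [haR] at u1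
        rw [habR] at u2
        apply mul_le_mul u1 u2 (by positivity) (by positivity)
    _ = 2 := by
        have hsum : a + (a + b) + 2 = n := by omega
        rw [inv_pow]
        rw [show (2:ℝ) * ((2:ℝ)^n)⁻¹ * (2*2^a * (2*2^(a+b))) = (2:ℝ)^(a+(a+b)+2) * ((2:ℝ)^n)⁻¹ * 2 by
          rw [pow_add, pow_add]; ring]
        rw [hsum, mul_inv_cancel₀ (by positivity), one_mul]

lemma cov_lower (n m : ℕ) (h1 : 1 ≤ m) (h2 : 2*m ≤ n) :
    (1/32768) / Real.sqrt ((m:ℝ) * n) ≤ Cov n m := by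
  have hn1 : 1 ≤ n := by omega
  set a := m - 1 with haa
  set b := n - 2*m with hbb
  set s := (n-m)/2 with hss
  set u := (b+1)/2 with huu
  set j₀ := s - u with hj₀
  set t := min (a+1) (b+1) with htt
  set q := Nat.sqrt t with hqq
  set p := q / 8 with hpp
  set w := p + 1 with hww
  -- nat facts about q
  have hq2 : q*q ≤ t := by rw [hqq]; have := Nat.sqrt_le' t; nlinarith [this]
  have hq3 : t < (q+1)*(q+1) := Nat.lt_succ_sqrt t
  have hqt : q ≤ t := Nat.sqrt_le_self t
  have hta : t ≤ a+1 := min_le_left _ _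
  have htb : t ≤ b+1 := min_le_right _ _
  clear_value a b s u j₀ t q p w
  clear hqq
  -- big branch facts
  have hA : p = 0 ∨ (64 ≤ a + 1 ∧ 64 ≤ b + 1 ∧ 8*q ≤ a+1 ∧ 8*q ≤ b+1 ∧
      4*(2*p+1)^2 ≤ a ∧ 4*(2*p+1)^2 ≤ b) := by
    rcases Nat.eq_zero_or_pos p with hp0 | hp1
    · exact Or.inl hp0
    · right
      have hq8 : 8 ≤ q := by omega
      have h64 : 8*8 ≤ q*q := Nat.mul_le_mul hq8 hq8
      have h8q : 8*q ≤ q*q := Nat.mul_le_mul_right q hq8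
      have h8p : 8*p ≤ q := by omega
      have h64p : (8*p)*(8*p) ≤ q*q := Nat.mul_le_mul h8p h8p
      have h64p' : 64*(p*p) ≤ q*q := by
        calc 64*(p*p) = (8*p)*(8*p) := by ring
          _ ≤ q*q := h64p
      have hpP : p*1 ≤ p*p := Nat.mul_le_mul_left p hp1
      have h28 : 28*1 ≤ 28*(p*p) := Nat.mul_le_mul_left 28 (by
        calc 1 = 1*1 := rfl
          _ ≤ p*p := Nat.mul_le_mul hp1 hp1)
      have hsq : 4*(2*p+1)^2 = 16*(p*p) + 16*p + 4 := by ring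
      refine ⟨by omega, by omega, by omega, by omega, by omega, by omega⟩
  -- window facts
  have hu_le_s : u ≤ s := by omega
  have hp_le_u : p ≤ u := by
    rcases hA with hp0 | hbig
    · omega
    · omega
  have hjw : j₀ + w ≤ m := by
    rcases hA with hp0 | hbig
    · omega
    · omega
  have hwin : ∀ j, j₀ ≤ j → j < j₀ + w →
      (j ≤ a ∧ j ≤ s ∧ s - j ≤ b ∧
      (4*((2*(j:ℤ)) - a)^2 ≤ (a:ℤ) ∨ ((2*(j:ℤ)) - a)^2 ≤ 1) ∧
      (4*((2*((s-j:ℕ):ℤ)) - b)^2 ≤ (b:ℤ) ∨ ((2*((s-j:ℕ):ℤ)) - b)^2 ≤ 1)) := by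
    intro j hj1 hj2
    refine ⟨by omega, by omega, by omega, ?_, ?_⟩
    · rcases hA with hp0 | hbig
      · right
        have hd : -1 ≤ 2*(j:ℤ) - a ∧ 2*(j:ℤ) - a ≤ 1 := by omega
        have hprod : (0:ℤ) ≤ (1 + (2*(j:ℤ) - a)) * (1 - (2*(j:ℤ) - a)) :=
          mul_nonneg (by linarith [hd.1]) (by linarith [hd.2])
        nlinarith [hprod]
      · left
        have hd : -(2*(p:ℤ)+1) ≤ 2*(j:ℤ) - a ∧ 2*(j:ℤ) - a ≤ 2*(p:ℤ)+1 := by omega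
        have hba : (4:ℤ)*(2*(p:ℤ)+1)^2 ≤ (a:ℤ) := by exact_mod_cast Nat.cast_le.mpr hbig.2.2.2.2.1
        have hprod : (0:ℤ) ≤ ((2*(p:ℤ)+1) + (2*(j:ℤ) - a)) * ((2*(p:ℤ)+1) - (2*(j:ℤ) - a)) :=
          mul_nonneg (by linarith [hd.1]) (by linarith [hd.2])
        nlinarith [hprod, hba]
    · rcases hA with hp0 | hbig
      · right
        have hd : -1 ≤ 2*((s-j:ℕ):ℤ) - b ∧ 2*((s-j:ℕ):ℤ) - b ≤ 1 := by omega
        have hprod : (0:ℤ) ≤ (1 + (2*((s-j:ℕ):ℤ) - b)) * (1 - (2*((s-j:ℕ):ℤ) - b)) :=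
          mul_nonneg (by linarith [hd.1]) (by linarith [hd.2])
        nlinarith [hprod]
      · left
        have hd : -(2*(p:ℤ)+1) ≤ 2*((s-j:ℕ):ℤ) - b ∧ 2*((s-j:ℕ):ℤ) - b ≤ 2*(p:ℤ)+1 := by omega
        have hbb' : (4:ℤ)*(2*(p:ℤ)+1)^2 ≤ (b:ℤ) := by exact_mod_cast Nat.cast_le.mpr hbig.2.2.2.2.2
        have hprod : (0:ℤ) ≤ ((2*(p:ℤ)+1) + (2*((s-j:ℕ):ℤ) - b)) * ((2*(p:ℤ)+1) - (2*((s-j:ℕ):ℤ) - b)) :=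
          mul_nonneg (by linarith [hd.1]) (by linarith [hd.2])
        nlinarith [hprod, hbb']
  have hsub : Finset.Ico j₀ (j₀+w) ⊆ Finset.range m := by
    intro x hx
    rw [Finset.mem_Ico] at hx
    rw [Finset.mem_range]
    omega
  have hmpos : (0:ℝ) < m := by exact_mod_cast h1
  have hnpos : (0:ℝ) < n := by exact_mod_cast hn1
  have haR : ((a:ℝ)) + 1 = (m:ℝ) := by
    have : a + 1 = m := by omega
    exact_mod_cast congrArg (fun x : ℕ => (x:ℝ)) this
  have hsb_pos : (0:ℝ) < Real.sqrt ((b:ℝ)+1) := Real.sqrt_pos.mpr (by positivity)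
  set lo := (2:ℝ)^a * (2:ℝ)^a * (2:ℝ)^b / (512 * (m:ℝ) * Real.sqrt ((b:ℝ)+1)) with hlo
  have hlo_pos : 0 < lo := by rw [hlo]; positivity
  have hterm : ∀ j ∈ Finset.Ico j₀ (j₀+w),
      lo ≤ ((a.choose j:ℝ))^2 * (if j ≤ s then ((b.choose (s-j)):ℝ) else 0) := by
    intro j hj
    rw [Finset.mem_Ico] at hj
    obtain ⟨hja, hjs, hsjb, hca, hcb⟩ := hwin j hj.1 hj.2
    rw [if_pos hjs]
    have nA := near_central a j hja hca
    have nB := near_central b (s-j) hsjb hcb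
    rw [haR] at nA
    have hA0 : (2:ℝ)^a / (8*Real.sqrt (m:ℝ)) ≤ (a.choose j : ℝ) := by
      rw [div_le_iff₀ (by positivity)]
      calc (2:ℝ)^a ≤ 8 * Real.sqrt (m:ℝ) * (a.choose j:ℝ) := nA
        _ = (a.choose j:ℝ) * (8*Real.sqrt (m:ℝ)) := by ring
    have hB0 : (2:ℝ)^b / (8*Real.sqrt ((b:ℝ)+1)) ≤ (b.choose (s-j) : ℝ) := by
      rw [div_le_iff₀ (by positivity)]
      calc (2:ℝ)^b ≤ 8 * Real.sqrt ((b:ℝ)+1) * (b.choose (s-j):ℝ) := nB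
        _ = _ := by ring
    have hA0n : (0:ℝ) ≤ (2:ℝ)^a / (8*Real.sqrt (m:ℝ)) := by positivity
    have hB0n : (0:ℝ) ≤ (2:ℝ)^b / (8*Real.sqrt ((b:ℝ)+1)) := by positivity
    have heq : ((2:ℝ)^a / (8*Real.sqrt (m:ℝ)))^2 * ((2:ℝ)^b / (8*Real.sqrt ((b:ℝ)+1))) = lo := by
      rw [hlo, div_pow, mul_pow, div_mul_div_comm]
      rw [show (Real.sqrt (m:ℝ))^2 = (m:ℝ) from Real.sq_sqrt hmpos.le]
      norm_num
      ring
    calc lo = ((2:ℝ)^a / (8*Real.sqrt (m:ℝ)))^2 * ((2:ℝ)^b / (8*Real.sqrt ((b:ℝ)+1))) := heq.symm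
      _ ≤ ((a.choose j:ℝ))^2 * ((b.choose (s-j)):ℝ) := by
          apply mul_le_mul (pow_le_pow_left₀ hA0n hA0 2) hB0 hB0n (by positivity)
  have hsum : (w:ℝ) * lo ≤ ∑ j ∈ Finset.range m,
      ((a.choose j:ℝ))^2 * (if j ≤ s then ((b.choose (s-j)):ℝ) else 0) := by
    have hcard : (Finset.Ico j₀ (j₀+w)).card = w := by rw [Nat.card_Ico]; omega
    calc (w:ℝ) * lo = (Finset.Ico j₀ (j₀+w)).card • lo := by rw [hcard, nsmul_eq_mul]
      _ ≤ ∑ j ∈ Finset.Ico j₀ (j₀+w), ((a.choose j:ℝ))^2 * (if j ≤ s then ((b.choose (s-j)):ℝ) else 0) :=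
          Finset.card_nsmul_le_sum _ _ _ hterm
      _ ≤ ∑ j ∈ Finset.range m, ((a.choose j:ℝ))^2 * (if j ≤ s then ((b.choose (s-j)):ℝ) else 0) := by
          apply Finset.sum_le_sum_of_subset_of_nonneg hsub
          intro j _ _
          have : (0:ℝ) ≤ (if j ≤ s then ((b.choose (s-j)):ℝ) else 0) := by split <;> positivity
          positivity
  rw [cov_eq n m h1 h2]
  simp only [← haa, ← hbb, ← hss]
  have final1 : (2:ℝ)⁻¹^n * ((w:ℝ)*lo) ≤ (2:ℝ)⁻¹^n * ∑ j ∈ Finset.range m,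
      ((a.choose j:ℝ))^2 * (if j ≤ s then ((b.choose (s-j)):ℝ) else 0) :=
    mul_le_mul_of_nonneg_left hsum (by positivity)
  refine le_trans ?_ final1
  have h2n : (2:ℝ)^a*(2:ℝ)^a*(2:ℝ)^b*4 = 2^n := by
    have hsum4 : a + a + b + 2 = n := by omega
    calc (2:ℝ)^a*2^a*2^b*4 = 2^(a+(a+(b+2))) := by rw [pow_add, pow_add, pow_add]; norm_num; ring
      _ = 2^n := by rw [show a+(a+(b+2)) = n by omega]
  have hval : (2:ℝ)⁻¹^n * ((w:ℝ)*lo) = (w:ℝ)/(2048*(m:ℝ)*Real.sqrt ((b:ℝ)+1)) := by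
    rw [hlo, inv_pow, ← h2n]
    have hm0 : (m:ℝ) ≠ 0 := ne_of_gt hmpos
    have hs0 : Real.sqrt ((b:ℝ)+1) ≠ 0 := ne_of_gt hsb_pos
    have h20 : (2:ℝ)^a ≠ 0 := by positivity
    have h2b : (2:ℝ)^b ≠ 0 := by positivity
    field_simp
    ring
  rw [hval]
  have hsqmn_pos : (0:ℝ) < Real.sqrt ((m:ℝ)*n) := Real.sqrt_pos.mpr (by positivity)
  rw [div_le_div_iff₀ hsqmn_pos (by positivity)]
  -- key estimate
  have key : Real.sqrt (m:ℝ) * Real.sqrt ((b:ℝ)+1) ≤ 16*(w:ℝ)*Real.sqrt (n:ℝ) := by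
    have k1 : (m:ℝ)*((b:ℝ)+1) ≤ (t:ℝ)*(n:ℝ) := by
      have hk1 : m*(b+1) ≤ t*n := by
        rcases le_total m (b+1) with h | h
        · have htm : t = m := by omega
          rw [htm]
          exact Nat.mul_le_mul_left m (by omega)
        · have htm : t = b+1 := by omega
          rw [htm]
          calc m*(b+1) = (b+1)*m := mul_comm _ _
            _ ≤ (b+1)*n := Nat.mul_le_mul_left (b+1) (by omega)
      exact_mod_cast hk1
    have k2 : Real.sqrt (m:ℝ) * Real.sqrt ((b:ℝ)+1) ≤ Real.sqrt (t:ℝ) * Real.sqrt (n:ℝ) := by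
      rw [← Real.sqrt_mul (by positivity), ← Real.sqrt_mul (by positivity)]
      exact Real.sqrt_le_sqrt k1
    have k3 : Real.sqrt (t:ℝ) ≤ (q:ℝ)+1 := by
      rw [show ((q:ℝ)+1) = Real.sqrt (((q:ℝ)+1)^2) from (Real.sqrt_sq (by positivity)).symm]
      apply Real.sqrt_le_sqrt
      have hcast : (t:ℝ) ≤ ((q+1)*(q+1) : ℕ) := by exact_mod_cast hq3.le
      push_cast at hcast
      nlinarith [hcast]
    have k4 : (q:ℝ)+1 ≤ 8*(w:ℝ) := by
      have : q+1 ≤ 8*w := by omega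
      exact_mod_cast this
    have hsn : (0:ℝ) ≤ Real.sqrt (n:ℝ) := Real.sqrt_nonneg _
    calc Real.sqrt (m:ℝ) * Real.sqrt ((b:ℝ)+1) ≤ Real.sqrt (t:ℝ) * Real.sqrt (n:ℝ) := k2
      _ ≤ ((q:ℝ)+1) * Real.sqrt (n:ℝ) := mul_le_mul_of_nonneg_right k3 hsn
      _ ≤ 8*(w:ℝ) * Real.sqrt (n:ℝ) := mul_le_mul_of_nonneg_right k4 hsn
      _ ≤ 16*(w:ℝ)*Real.sqrt (n:ℝ) := by
          have hw0 : (0:ℝ) ≤ (w:ℝ) := by positivity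
          nlinarith [mul_nonneg hw0 hsn]
  rw [Real.sqrt_mul (by positivity : (0:ℝ) ≤ (m:ℝ))]
  have hm_eq : (m:ℝ) = Real.sqrt (m:ℝ) * Real.sqrt (m:ℝ) := (Real.mul_self_sqrt hmpos.le).symm
  have hkey2 := mul_le_mul_of_nonneg_left key (Real.sqrt_nonneg (m:ℝ))
  nlinarith [hkey2, hm_eq]

/-- **Two-sided bound: `Cov(n, m) = Θ(√k/n) = Θ(1/√(mn))`.**
There are `c, C > 0` and `N` such that for all `n ≥ N` and all admissible fold
sizes `m ∣ n` with `1 ≤ m` and `2m ≤ n`,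
`c/√(mn) ≤ Cov(n, m) ≤ C/√(mn)`. -/
theorem cov_theta_sqrt_k_over_n :
    ∃ c C : ℝ, 0 < c ∧ 0 < C ∧ ∃ N : ℕ, ∀ n : ℕ, N ≤ n → ∀ m : ℕ,
      m ∣ n → 1 ≤ m → 2 * m ≤ n →
      c / Real.sqrt ((m : ℝ) * n) ≤ Cov n m ∧
      Cov n m ≤ C / Real.sqrt ((m : ℝ) * n) := by
  refine ⟨1/32768, 2, by norm_num, by norm_num, 0, ?_⟩
  intro n _ m _ h1 h2
  exact ⟨cov_lower n m h1 h2, cov_upper n m h1 h2⟩
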